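/- arXiv:2010.12330 — 3 statements merged into one kernel-verified Lean document; each statement's English description precedes it below -/
import Mathlib

section
/- Every tournament on 2^(k-1) vertices contains a transitive subtournament of size at least k. -/
open scoped Classical

def IsTournament {V : Type*} (E : V → V → Prop) : Prop :=
  (∀ v, ¬ E v v) ∧ ∀ u v : V, u ≠ v → (E u v ↔ ¬ E v u)

def TransOn {V : Type*} (E : V → V → Prop) (s : Finset V) : Prop :=
  ∀ a ∈ s, ∀ b ∈ s, ∀ c ∈ s, E a b → E b c → E a c

noncomputable def trOn {V : Type*} (E : V → V → Prop) (A : Finset V) : ℕ :=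
  A.powerset.sup fun s => if TransOn E s then s.card else 0

noncomputable def trT {V : Type*} (E : V → V → Prop) [Fintype V] : ℕ :=
  trOn E Finset.univ

def IsCritical {V : Type*} [Fintype V] (E : V → V → Prop) (ε : ℝ) : Prop :=
  (trT E : ℝ) < (Fintype.card V : ℝ) ^ ε ∧
  ∀ A : Finset V, A ≠ Finset.univ → ((A.card : ℝ) ^ ε ≤ (trOn E A : ℝ))

noncomputable def dens {V : Type*} (E : V → V → Prop) (X Y : Finset V) : ℝ :=
  (((X ×ˢ Y).filter fun p => E p.1 p.2).card : ℝ) / ((X.card : ℝ) * (Y.card : ℝ))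

def SmoothStruct {V : Type*} [Fintype V] (E : V → V → Prop) (c lam : ℝ) {m : ℕ}
    (w : Fin m → Bool) (S : Fin m → Finset V) : Prop :=
  (∀ i j : Fin m, i ≠ j → Disjoint (S i) (S j)) ∧
  (∀ i, w i = false → c * (Fintype.card V : ℝ) ≤ ((S i).card : ℝ)) ∧
  (∀ i, w i = true → TransOn E (S i) ∧ c * (trT E : ℝ) ≤ ((S i).card : ℝ)) ∧
  (∀ i j : Fin m, i < j →
    (∀ v ∈ S i, 1 - lam ≤ dens E {v} (S j)) ∧ (∀ v ∈ S j, 1 - lam ≤ dens E (S i) {v}))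

/-!
Pick a vertex `v` of a set of at least `2 ^ (k + 1)` vertices. Every other vertex is an
out-neighbour or an in-neighbour of `v`, so one of these two sets has at least `2 ^ k`
elements and, by induction, contains a transitive set of size `k + 1`. Adding `v`, which beats
all of it or loses to all of it, keeps it transitive.
-/

open Finset

section

variable {V : Type*} {E : V → V → Prop}

theorem IsTournament.asymm (hT : IsTournament E) {u v : V} (h : E u v) : ¬ E v u := by
  rcases eq_or_ne u v with rfl | hne
  · exact hT.1 u
  · exact (hT.2 u v hne).mp h

theorem IsTournament.rel_or_rel (hT : IsTournament E) {u v : V} (hne : u ≠ v) :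
    E u v ∨ E v u := by
  rw [hT.2 u v hne]
  exact em' (E v u)

theorem transOn_empty : TransOn E ∅ := by
  simp [TransOn]

theorem TransOn.flip {s : Finset V} (hs : TransOn E s) : TransOn (flip E) s :=
  fun a ha b hb c hc hab hbc => hs c hc b hb a ha hbc hab

theorem TransOn.insert_of_forall_rel_left (hE : ∀ u v, E u v → ¬ E v u) {s : Finset V} {v : V}
    (hs : TransOn E s) (hv : ∀ u ∈ s, E v u) : TransOn E (insert v s) := by
  intro a ha b hb c hc hab hbc
  have hv' : ∀ u ∈ insert v s, ¬ E u v := by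
    intro u hu huv
    rcases mem_insert.1 hu with rfl | hu
    · exact hE u u huv huv
    · exact hE v u (hv u hu) huv
  rcases mem_insert.1 hc with rfl | hcs
  · exact absurd hbc (hv' b hb)
  rcases mem_insert.1 ha with rfl | has
  · exact hv c hcs
  rcases mem_insert.1 hb with rfl | hbs
  · exact absurd hab (hv' a ha)
  · exact hs a has b hbs c hcs hab hbc

theorem TransOn.insert_of_forall_rel_right (hE : ∀ u v, E u v → ¬ E v u) {s : Finset V} {v : V}
    (hs : TransOn E s) (hv : ∀ u ∈ s, E u v) : TransOn E (insert v s) :=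
  (hs.flip.insert_of_forall_rel_left (fun u w h => hE w u h) hv).flip

theorem IsTournament.exists_transOn_card_eq (hT : IsTournament E) (k : ℕ) {A : Finset V}
    (hA : 2 ^ k ≤ #A) : ∃ s ⊆ A, TransOn E s ∧ #s = k + 1 := by
  induction k generalizing A with
  | zero =>
    obtain ⟨v, hv⟩ := card_pos.mp (by omega : 0 < #A)
    have hs : TransOn E {v} := by
      simpa using (transOn_empty (E := E)).insert_of_forall_rel_left (v := v)
        (fun _ _ h => hT.asymm h) (by simp)
    exact ⟨{v}, singleton_subset_iff.mpr hv, hs, rfl⟩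
  | succ k ih =>
    obtain ⟨v, hv⟩ := card_pos.mp ((by positivity : 0 < 2 ^ (k + 1)).trans_le hA)
    set Out := (A.erase v).filter (E v ·)
    set In := (A.erase v).filter (E · v)
    have hcover : A.erase v ⊆ Out ∪ In := fun u hu => by
      rw [← filter_or, mem_filter]
      exact ⟨hu, hT.rel_or_rel (ne_of_mem_erase hu).symm⟩
    have hlarge : 2 ^ k ≤ #Out ∨ 2 ^ k ≤ #In := by
      have h1 := (card_le_card hcover).trans (card_union_le Out In)
      have h2 := card_erase_of_mem hv
      have h3 := pow_succ 2 k
      omega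
    have hextend : ∀ B ⊆ A.erase v, (∀ s ⊆ B, TransOn E s → TransOn E (insert v s)) →
        2 ^ k ≤ #B → ∃ s ⊆ A, TransOn E s ∧ #s = k + 1 + 1 := by
      intro B hB hins hkB
      obtain ⟨s, hsB, hs, hcard⟩ := ih hkB
      have hsA : s ⊆ A.erase v := hsB.trans hB
      refine ⟨insert v s, insert_subset hv (hsA.trans (erase_subset v A)), hins s hsB hs, ?_⟩
      rw [card_insert_of_notMem fun h => notMem_erase v A (hsA h), hcard]
    rcases hlarge with hOut | hIn
    · exact hextend Out (filter_subset _ _) (fun s hs hst => hst.insert_of_forall_rel_left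
        (fun _ _ h => hT.asymm h) fun u hu => (mem_filter.1 (hs hu)).2) hOut
    · exact hextend In (filter_subset _ _) (fun s hs hst => hst.insert_of_forall_rel_right
        (fun _ _ h => hT.asymm h) fun u hu => (mem_filter.1 (hs hu)).2) hIn

end

/-- Every tournament on `2^(k-1)` vertices contains a transitive subtournament of
size at least `k`. -/
theorem every_tournament_contains_large_transitive {V : Type*} [Fintype V]
    (E : V → V → Prop) (k : ℕ) (hT : IsTournament E)
    (hcard : Fintype.card V = 2 ^ (k - 1)) :
    ∃ s : Finset V, TransOn E s ∧ k ≤ s.card := by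
  obtain ⟨s, -, hs, hcard_s⟩ := hT.exists_transOn_card_eq (k - 1) (A := univ)
    (by rw [card_univ, hcard])
  exact ⟨s, hs, by omega⟩
end

section
/- Let T be an ε-critical tournament with |T| = n, and let c, f > 0 be constants with ε < log_c(1 - f). Then for every A ⊆ V(T) with |A| ≥ cn and every transitive subtournament G of T with |G| ≥ f·tr(T) and V(G) ∩ A = ∅, the set A is not complete from V(G) and A is not complete to V(G). -/
open scoped Classical

/-!
Take a largest transitive subset `S` of `A`. Since `A` is a proper subset of the vertices,
criticality gives `|S| ≥ |A|^ε ≥ c^ε n^ε > c^ε tr(T) > (1 - f) tr(T)`, the last step being a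
rewriting of `ε < log_c (1 - f)`. If `A` were complete to or from `G`, then `S ∪ G` would be
transitive, so `|S| + |G| ≤ tr(T)`, contradicting `|G| ≥ f tr(T)`.
-/

namespace IsTournament

variable {V : Type*} {E : V → V → Prop}

theorem asymm_s3 (hT : IsTournament E) {u v : V} (huv : E u v) : ¬ E v u := by
  by_cases h : u = v
  · subst h
    exact hT.1 u
  · exact (hT.2 u v h).1 huv

theorem transOn_union (hT : IsTournament E) {X Y : Finset V} (hX : TransOn E X)
    (hY : TransOn E Y) (hXY : ∀ x ∈ X, ∀ y ∈ Y, E x y) : TransOn E (X ∪ Y) := by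
  intro a ha b hb c hc hab hbc
  simp only [Finset.mem_union] at ha hb hc
  rcases ha with ha | ha <;> rcases hb with hb | hb <;> rcases hc with hc | hc <;>
    first
    | exact hX a ha b hb c hc hab hbc
    | exact hY a ha b hb c hc hab hbc
    | exact hXY a ha c hc
    | exact absurd (hXY b hb a ha) (hT.asymm_s3 hab)
    | exact absurd (hXY c hc b hb) (hT.asymm_s3 hbc)

theorem disjoint_of_forall_adj (hT : IsTournament E) {X Y : Finset V}
    (hXY : ∀ x ∈ X, ∀ y ∈ Y, E x y) : Disjoint X Y :=
  Finset.disjoint_left.2 fun {v} hvX hvY => hT.1 v (hXY v hvX v hvY)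

end IsTournament

section TransOn

variable {V : Type*} {E : V → V → Prop}

theorem transOn_singleton (v : V) : TransOn E {v} := by
  intro a ha b hb c hc hab _
  rw [Finset.mem_singleton] at ha hb hc
  subst ha hb hc
  exact hab

theorem TransOn.card_le_trOn {A S : Finset V} (hS : TransOn E S) (hSA : S ⊆ A) :
    S.card ≤ trOn E A := by
  have := Finset.le_sup (f := fun s => if TransOn E s then s.card else 0)
    (Finset.mem_powerset.2 hSA)
  simpa [trOn, hS] using this

theorem exists_transOn_card_eq_trOn (A : Finset V) :
    ∃ S ⊆ A, TransOn E S ∧ S.card = trOn E A := by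
  obtain ⟨s, hs, hsup⟩ := Finset.exists_mem_eq_sup A.powerset
    ⟨∅, Finset.empty_mem_powerset A⟩ (fun s => if TransOn E s then s.card else 0)
  by_cases h : TransOn E s
  · exact ⟨s, Finset.mem_powerset.1 hs, h, by rw [trOn, hsup, if_pos h]⟩
  · refine ⟨∅, Finset.empty_subset A, fun a ha => by simp at ha, ?_⟩
    rw [Finset.card_empty, trOn, hsup, if_neg h]

variable [Fintype V]

theorem one_le_trT [Nonempty V] : 1 ≤ trT E := by
  obtain ⟨v⟩ := ‹Nonempty V›
  simpa [trT] using (transOn_singleton (E := E) v).card_le_trOn (Finset.subset_univ _)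

theorem IsTournament.card_add_card_le_trT (hT : IsTournament E) {X Y : Finset V}
    (hX : TransOn E X) (hY : TransOn E Y) (hXY : ∀ x ∈ X, ∀ y ∈ Y, E x y) :
    X.card + Y.card ≤ trT E := by
  rw [← Finset.card_union_of_disjoint (hT.disjoint_of_forall_adj hXY)]
  exact (hT.transOn_union hX hY hXY).card_le_trOn (Finset.subset_univ _)

end TransOn

theorem Real.lt_rpow_of_lt_logb {c y ε : ℝ} (hc : 0 < c) (hy : y < 1) (hε : 0 < ε)
    (h : ε < Real.logb c y) : y < c ^ ε := by
  rcases le_or_gt y 0 with hle | hpos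
  · exact hle.trans_lt (Real.rpow_pos_of_pos hc ε)
  have hc1 : c < 1 := by
    by_contra! h1
    have : Real.logb c y ≤ 0 :=
      div_nonpos_of_nonpos_of_nonneg (Real.log_nonpos hpos.le hy.le) (Real.log_nonneg h1)
    linarith
  exact (Real.lt_logb_iff_rpow_lt_of_base_lt_one hc hc1 hpos).1 h

namespace IsCritical

variable {V : Type*} [Fintype V] {E : V → V → Prop} {ε : ℝ}

theorem nonempty (hcrit : IsCritical E ε) (hε : 0 < ε) : Nonempty V := by
  rw [← Fintype.card_pos_iff]
  by_contra! hcard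
  have htr := hcrit.1
  rw [Nat.le_zero.1 hcard, Nat.cast_zero, Real.zero_rpow hε.ne'] at htr
  exact (Nat.cast_nonneg _).not_gt htr

theorem exists_transOn_subset_one_sub_mul_lt_card (hcrit : IsCritical E ε) (hε : 0 < ε)
    {c f : ℝ} (hc : 0 < c) (hf : 0 < f) (hlog : ε < Real.logb c (1 - f)) {A : Finset V}
    (hA : c * (Fintype.card V : ℝ) ≤ (A.card : ℝ)) (hA_ne : A ≠ Finset.univ) :
    ∃ S ⊆ A, TransOn E S ∧ (1 - f) * (trT E : ℝ) < (S.card : ℝ) := by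
  have := hcrit.nonempty hε
  obtain ⟨S, hSA, hS, hS_card⟩ := exists_transOn_card_eq_trOn (E := E) A
  refine ⟨S, hSA, hS, ?_⟩
  have htr_pos : (0 : ℝ) < trT E := by exact_mod_cast one_le_trT
  have hcε : 0 < c ^ ε := Real.rpow_pos_of_pos hc ε
  calc (1 - f) * (trT E : ℝ)
      < c ^ ε * trT E :=
        mul_lt_mul_of_pos_right (Real.lt_rpow_of_lt_logb hc (by linarith) hε hlog) htr_pos
    _ < c ^ ε * (Fintype.card V : ℝ) ^ ε := mul_lt_mul_of_pos_left hcrit.1 hcε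
    _ = (c * Fintype.card V) ^ ε := (Real.mul_rpow hc.le (Nat.cast_nonneg _)).symm
    _ ≤ (A.card : ℝ) ^ ε := Real.rpow_le_rpow (by positivity) hA hε.le
    _ ≤ S.card := hS_card ▸ hcrit.2 A hA_ne

end IsCritical

/-- In an ε-critical tournament with `ε < log_c (1-f)`, a set `A` with
`|A| ≥ c·n` is never complete from nor complete to a disjoint transitive
subtournament `G` with `|G| ≥ f·tr(T)`. -/
theorem critical_not_complete {V : Type*} [Fintype V] (E : V → V → Prop)
    (ε c f : ℝ) (hT : IsTournament E) (hε : 0 < ε) (hcrit : IsCritical E ε)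
    (hc : 0 < c) (hf : 0 < f) (hlog : ε < Real.logb c (1 - f))
    (A G : Finset V) (hA : c * (Fintype.card V : ℝ) ≤ (A.card : ℝ))
    (hG : TransOn E G) (hGsize : f * (trT E : ℝ) ≤ (G.card : ℝ))
    (hdisj : Disjoint A G) :
    (¬ ∀ g ∈ G, ∀ a ∈ A, E g a) ∧ (¬ ∀ a ∈ A, ∀ g ∈ G, E a g) := by
  have := hcrit.nonempty hε
  have hG_ne : G.Nonempty := by
    have htr_pos : (0 : ℝ) < trT E := by exact_mod_cast one_le_trT
    have hG_pos : (0 : ℝ) < G.card := (mul_pos hf htr_pos).trans_le hGsize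
    exact Finset.card_pos.1 (by exact_mod_cast hG_pos)
  have hA_ne : A ≠ Finset.univ := by
    rintro rfl
    obtain ⟨g, hg⟩ := hG_ne
    exact Finset.disjoint_left.1 hdisj (Finset.mem_univ g) hg
  obtain ⟨S, hSA, hS, hS_large⟩ :=
    hcrit.exists_transOn_subset_one_sub_mul_lt_card hε hc hf hlog hA hA_ne
  constructor
  · intro hGA
    have := hT.card_add_card_le_trT hG hS fun g hg s hs => hGA g hg s (hSA hs)
    have : (G.card : ℝ) + S.card ≤ trT E := by exact_mod_cast this
    linarith
  · intro hAG
    have := hT.card_add_card_le_trT hS hG fun s hs g hg => hAG s (hSA hs) g hg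
    have : (S.card : ℝ) + G.card ≤ trT E := by exact_mod_cast this
    linarith
end

section
/- Let T be a tournament containing five vertices x, z, u, v, y with arcs (x,z), (z,u), (z,v), (z,y), (y,x), (y,u), (v,x), (u,v) all in E(T). Then, regardless of the orientations of the remaining arcs between these five vertices, T contains the boat tournament B (with vertex set {a,b,c,d} and arcs (d,a),(d,b),(c,a),(a,b),(b,c),(c,d)) as a subtournament on four of the five vertices. Specifically: if (u,x) ∈ E(T) then {x,z,u,y} induces a copy of B; if (y,v) ∈ E(T) then {x,z,v,y} induces a copy of B; and if (x,u),(v,y) ∈ E(T) then {x,u,v,y} induces a copy of B. -/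
open scoped Classical

/-- `a,b,c,d` induce a copy of the boat `B` (arc set
`{(d,a),(d,b),(c,a),(a,b),(b,c),(c,d)}`) in `E`. -/
def InducesBoat {V : Type*} (E : V → V → Prop) (a b c d : V) : Prop :=
  a ≠ b ∧ a ≠ c ∧ a ≠ d ∧ b ≠ c ∧ b ≠ d ∧ c ≠ d ∧
  E a b ∧ E b c ∧ E c d ∧ E d a ∧ E d b ∧ E c a

/-!
The boat appears as `(a, b, c, d) = (u, x, z, y)` when `u → x`, as `(v, x, z, y)` when `y → v`,
and as `(x, u, v, y)` when `x → u` and `v → y`. Since `E` is a tournament, one of these three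
cases always occurs.
-/

theorem IsTournament.arc_of_not_arc {V : Type*} {E : V → V → Prop} (hT : IsTournament E)
    {u v : V} (hne : u ≠ v) (h : ¬ E u v) : E v u :=
  (hT.2 v u hne.symm).mpr h

theorem exists_boat_subset_of_exists_boat_eq {V : Type*} {E : V → V → Prop} {S T : Set V}
    (hST : S ⊆ T) :
    (∃ a b c d : V, ({a, b, c, d} : Set V) = S ∧ InducesBoat E a b c d) →
      ∃ a b c d : V, ({a, b, c, d} : Set V) ⊆ T ∧ InducesBoat E a b c d
  | ⟨a, b, c, d, hS, hB⟩ => ⟨a, b, c, d, hS ▸ hST, hB⟩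

/-- A tournament containing the configuration `x,z,u,v,y` with the listed
arcs contains the boat on four of these five vertices, regardless of the
orientations of the remaining arcs. -/
theorem five_vertices_contain_boat {V : Type*} (E : V → V → Prop)
    (hT : IsTournament E) (x z u v y : V)
    (hdist : List.Pairwise (· ≠ ·) [x, z, u, v, y])
    (a1 : E x z) (a2 : E z u) (a3 : E z v) (a4 : E z y) (a5 : E y x)
    (a6 : E y u) (a7 : E v x) (a8 : E u v) :
    ((E u x → ∃ a b c d : V, ({a, b, c, d} : Set V) = {x, z, u, y} ∧
        InducesBoat E a b c d) ∧
     (E y v → ∃ a b c d : V, ({a, b, c, d} : Set V) = {x, z, v, y} ∧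
        InducesBoat E a b c d) ∧
     (E x u ∧ E v y → ∃ a b c d : V, ({a, b, c, d} : Set V) = {x, u, v, y} ∧
        InducesBoat E a b c d)) ∧
    ∃ a b c d : V, ({a, b, c, d} : Set V) ⊆ ({x, z, u, v, y} : Set V) ∧
      InducesBoat E a b c d := by
  simp only [List.pairwise_cons, List.mem_cons, List.not_mem_nil, or_false,
    List.Pairwise.nil, and_true, forall_eq_or_imp, forall_eq] at hdist
  obtain ⟨⟨hxz, hxu, hxv, hxy⟩, ⟨hzu, hzv, hzy⟩, ⟨huv, huy⟩, hvy, -⟩ := hdist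
  have boat_xzuy : E u x → ∃ a b c d : V, ({a, b, c, d} : Set V) = {x, z, u, y} ∧
      InducesBoat E a b c d := fun hux =>
    ⟨u, x, z, y, by rw [Set.insert_comm u x, Set.insert_comm u z],
      hxu.symm, hzu.symm, huy, hxz, hxy, hzy, hux, a1, a4, a6, a5, a2⟩
  have boat_xzvy : E y v → ∃ a b c d : V, ({a, b, c, d} : Set V) = {x, z, v, y} ∧
      InducesBoat E a b c d := fun hyv =>
    ⟨v, x, z, y, by rw [Set.insert_comm v x, Set.insert_comm v z],
      hxv.symm, hzv.symm, hvy, hxz, hxy, hzy, a7, a1, a4, hyv, a5, a3⟩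
  have boat_xuvy : E x u ∧ E v y → ∃ a b c d : V, ({a, b, c, d} : Set V) = {x, u, v, y} ∧
      InducesBoat E a b c d := fun ⟨hxu', hvy'⟩ =>
    ⟨x, u, v, y, rfl, hxu, hxv, hxy, huv, huy, hvy, hxu', a8, hvy', a5, a6, a7⟩
  refine ⟨⟨boat_xzuy, boat_xzvy, boat_xuvy⟩, ?_⟩
  by_cases hux : E u x
  · exact exists_boat_subset_of_exists_boat_eq (by simp [Set.insert_subset_iff]) (boat_xzuy hux)
  by_cases hvy' : E v y
  · exact exists_boat_subset_of_exists_boat_eq (by simp [Set.insert_subset_iff])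
      (boat_xuvy ⟨hT.arc_of_not_arc hxu.symm hux, hvy'⟩)
  · exact exists_boat_subset_of_exists_boat_eq (by simp [Set.insert_subset_iff])
      (boat_xzvy (hT.arc_of_not_arc hvy hvy'))
end
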